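/- Increment control by the triple norm: for a symmetric positive semidefinite bilinear form s and any sequence (p^n), for every ε > 0, ∑_{n=2}^{N−1} s(δp^{n+1}, δp^{n+1}) ≤ (ε/2)∑_{n=2}^{N−1}|p^{n+1}|_s² + ε^{−1}(|δp^N|_s² + ∑_{n=3}^{N−1}|δδp^{n+1}|_s²) + (1+ε^{−1})|p²|_s². -/

import Mathlib

/-!
Summation by parts turns `∑ s(δpⁿ⁺¹, δpⁿ⁺¹)` into the boundary terms `s(δpᴺ, pᴺ) - s(δp³, p²)`
minus `∑ s(δδpⁿ⁺¹, pⁿ)`. Each of these pairings is split by the weighted Young inequality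
`|s(a, b)| ≤ ε⁻¹ |a|²_s + (ε/4) |b|²_s`, except that `s(δp³, p²) = s(p³, p²) - |p²|_s²` is split
first, which produces the extra `|p²|_s²`. The three `(ε/4)`-weighted sums of `|pⁿ|_s²`
(with the single term `|p³|_s²` counted twice) are at most `(ε/2) ∑ |pⁿ⁺¹|_s²`.
-/

open Finset
open LinearMap (BilinForm)

namespace LinearMap.BilinForm

/-- Summation by parts for the increments `p (n+1) - p n`. -/
theorem sum_apply_sub_sub_eq {R M : Type*} [CommRing R] [AddCommGroup M] [Module R M]
    (s : BilinForm R M) (p : ℕ → M) {m K : ℕ} (hmK : m ≤ K) :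
    ∑ n ∈ Icc m K, s (p (n+1) - p n) (p (n+1) - p n)
      = s (p (K+1) - p K) (p (K+1)) - s (p (m+1) - p m) (p m)
        - ∑ n ∈ Icc (m+1) K, s ((p (n+1) - p n) - (p n - p (n-1))) (p n) := by
  induction K, hmK using Nat.le_induction with
  | base => simp [map_sub]
  | succ K hmK ih =>
    rw [sum_Icc_succ_top (by omega), ih, sum_Icc_succ_top (by omega), Nat.add_sub_cancel]
    simp only [map_sub, LinearMap.sub_apply]
    ring

section Young

variable {M : Type*} [AddCommGroup M] [Module ℝ M] {s : BilinForm ℝ M}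
  (hsym : ∀ x y : M, s x y = s y x) (hpsd : ∀ x, 0 ≤ s x x) {ε : ℝ} (hε : 0 < ε)
include hsym hpsd hε

theorem abs_apply_le (a b : M) : |s a b| ≤ ε⁻¹ * s a a + ε/4 * s b b := by
  have young : ∀ a, s a b ≤ ε⁻¹ * s a a + ε/4 * s b b := fun a => by
    have hsq : ε⁻¹ * s a a + ε/4 * s b b - s a b
        = ε⁻¹ * s (a - (ε/2) • b) (a - (ε/2) • b) := by
      simp only [map_sub, map_smul, LinearMap.sub_apply, LinearMap.smul_apply, smul_eq_mul,
        hsym b a]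
      field_simp
      ring
    linarith [mul_nonneg (inv_nonneg.2 hε.le) (hpsd (a - (ε/2) • b))]
  refine abs_le'.2 ⟨young a, ?_⟩
  simpa using young (-a)

theorem abs_sum_apply_le {ι : Type*} (I : Finset ι) (u v : ι → M) :
    |∑ i ∈ I, s (u i) (v i)|
      ≤ ε⁻¹ * ∑ i ∈ I, s (u i) (u i) + ε/4 * ∑ i ∈ I, s (v i) (v i) := by
  rw [mul_sum, mul_sum, ← sum_add_distrib]
  exact (abs_sum_le_sum_abs _ _).trans
    (sum_le_sum fun i _ => abs_apply_le hsym hpsd hε (u i) (v i))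

end Young

end LinearMap.BilinForm

open LinearMap.BilinForm

/-- Increment control by the triple norm (Lemma 4.3 without the time-step factor). -/
theorem increment_control
    {H : Type*} [AddCommGroup H] [Module ℝ H]
    (s : LinearMap.BilinForm ℝ H)
    (hsym : ∀ x y, s x y = s y x)
    (hpsd : ∀ x, 0 ≤ s x x)
    (p : ℕ → H) (N : ℕ) (hN : 4 ≤ N) :
    ∀ ε : ℝ, 0 < ε →
    ∑ n ∈ Finset.Icc 2 (N-1), s (p (n+1) - p n) (p (n+1) - p n)
      ≤ (ε/2) * ∑ n ∈ Finset.Icc 2 (N-1), s (p (n+1)) (p (n+1))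
        + ε⁻¹ * (s (p N - p (N-1)) (p N - p (N-1))
            + ∑ n ∈ Finset.Icc 3 (N-1),
                s ((p (n+1) - p n) - (p n - p (n-1))) ((p (n+1) - p n) - (p n - p (n-1))))
        + (1 + ε⁻¹) * s (p 2) (p 2) := by
  intro ε hε
  obtain ⟨K, rfl⟩ : ∃ K, N = K + 1 := ⟨N - 1, by omega⟩
  have hlast := (le_abs_self _).trans
    (abs_apply_le hsym hpsd hε (p (K+1) - p K) (p (K+1)))
  have hfirst : -s (p 3 - p 2) (p 2)
      ≤ ε/4 * s (p 3) (p 3) + ε⁻¹ * s (p 2) (p 2) + s (p 2) (p 2) := by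
    rw [map_sub, LinearMap.sub_apply, hsym (p 3)]
    linarith [(neg_le_abs _).trans (abs_apply_le hsym hpsd hε (p 2) (p 3))]
  have hmiddle := (neg_le_abs _).trans (abs_sum_apply_le hsym hpsd hε (Icc 3 K)
    (fun n => (p (n+1) - p n) - (p n - p (n-1))) p)
  have hshift : ∑ n ∈ Icc 2 K, s (p (n+1)) (p (n+1))
      = ∑ n ∈ Icc 3 K, s (p n) (p n) + s (p (K+1)) (p (K+1)) := by
    rw [← sum_Icc_succ_top (by omega), ← map_add_right_Icc 2 K 1, sum_map]
    rfl
  have hp3 : s (p 3) (p 3) ≤ ∑ n ∈ Icc 3 K, s (p n) (p n) :=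
    single_le_sum (f := fun n => s (p n) (p n)) (fun n _ => hpsd (p n)) (by simp; omega)
  have hε4 : 0 ≤ ε/4 := by positivity
  rw [Nat.add_sub_cancel, sum_apply_sub_sub_eq s p (by omega : 2 ≤ K), hshift]
  linarith [mul_le_mul_of_nonneg_left hp3 hε4, mul_nonneg hε4 (hpsd (p (K+1)))]
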